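/- arXiv:2002.01285 — 4 statements merged into one kernel-verified Lean document; each statement's English description precedes it below -/
import Mathlib

section
/- Let (R, ι, σ) be an object of alg_{A/End_k(A)}. Then the set P(R) of primitive elements is naturally a Lie–Rinehart algebra over (k,A); precisely: (i) P(R) is an A-submodule of R, where a ∈ A acts by r ↦ ι(a)·r; (ii) P(R) is closed under the commutator bracket [r₁,r₂] = r₁r₂ − r₂r₁; (iii) for every r ∈ P(R), the map a ↦ σ(r)(a) is a k-linear derivation of A; (iv) for all r₁ ∈ P(R), r₂ ∈ R and a ∈ A one has [r₁, ι(a)·r₂] − ι(a)·[r₁,r₂] = ι(σ(r₁)(a))·r₂. Consequently P(R), with the commutator bracket and the restriction of σ as anchor, satisfies all the axioms of a Lie–Rinehart algebra over (k,A). -/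
/-- The set of primitive elements of an object `(R, ι, σ)` of `alg_{A/End_k(A)}`:
`P(R) = { r ∈ R | r·ι(a) − ι(a)·r = ι(σ(r)(a)) for all a ∈ A }`. -/
def Prim (k : Type*) {A R : Type*} [CommRing k] [CommRing A] [Algebra k A]
    [Ring R] [Algebra k R] (ι : A →ₐ[k] R) (σ : R →ₐ[k] Module.End k A) : Set R :=
  {r | ∀ a : A, r * ι a - ι a * r = ι (σ r a)}

/-!
Write `⁅r, s⁆ = r * s - s * r`, so that `r` is primitive iff `⁅r, ι a⁆ = ι (σ r a)` for all `a`.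
Closure under brackets is the Jacobi identity, closure under `ι a * -` holds because the image of
`ι` is commutative, and (iv) is the Leibniz rule for `⁅r, -⁆`. For (iii), apply `σ` to
`⁅r, ι a⁆ = ι (σ r a)`: since `σ ∘ ι` is left multiplication, this reads
`⁅σ r, a * -⁆ = σ r a * -`, which is the derivation rule.
-/

section Commutator

attribute [local instance] LieRing.ofAssociativeRing

namespace Ring

variable {R : Type*} [Ring R]

theorem lie_mul_right (r x s : R) : ⁅r, x * s⁆ = ⁅r, x⁆ * s + x * ⁅r, s⁆ := by
  simp only [lie_def]; noncomm_ring

theorem mul_lie_left (x r y : R) : ⁅x * r, y⁆ = x * ⁅r, y⁆ + ⁅x, y⁆ * r := by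
  simp only [lie_def]; noncomm_ring

end Ring

namespace Prim

variable {k A R : Type*} [CommRing k] [CommRing A] [Algebra k A] [Ring R] [Algebra k R]
  {ι : A →ₐ[k] R} {σ : R →ₐ[k] Module.End k A}

theorem mem_iff_lie {r : R} : r ∈ Prim k ι σ ↔ ∀ a, ⁅r, ι a⁆ = ι (σ r a) := Iff.rfl

theorem zero_mem : (0 : R) ∈ Prim k ι σ := mem_iff_lie.2 fun a => by
  rw [zero_lie, map_zero, LinearMap.zero_apply, map_zero]

theorem add_mem {r₁ r₂ : R} (h₁ : r₁ ∈ Prim k ι σ) (h₂ : r₂ ∈ Prim k ι σ) :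
    r₁ + r₂ ∈ Prim k ι σ := mem_iff_lie.2 fun a => by
  rw [add_lie, mem_iff_lie.1 h₁, mem_iff_lie.1 h₂, map_add, LinearMap.add_apply, map_add]

theorem lie_mem {r₁ r₂ : R} (h₁ : r₁ ∈ Prim k ι σ) (h₂ : r₂ ∈ Prim k ι σ) :
    ⁅r₁, r₂⁆ ∈ Prim k ι σ := mem_iff_lie.2 fun a => by
  have hσ_lie : σ ⁅r₁, r₂⁆ a = σ r₁ (σ r₂ a) - σ r₂ (σ r₁ a) := by
    simp only [Ring.lie_def, map_sub, map_mul, LinearMap.sub_apply, Module.End.mul_apply]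
  rw [lie_lie, mem_iff_lie.1 h₂, mem_iff_lie.1 h₁, mem_iff_lie.1 h₁, mem_iff_lie.1 h₂, hσ_lie,
    map_sub]

theorem lie_ι_mul_sub {r : R} (hr : r ∈ Prim k ι σ) (a : A) (s : R) :
    ⁅r, ι a * s⁆ - ι a * ⁅r, s⁆ = ι (σ r a) * s := by
  rw [Ring.lie_mul_right, mem_iff_lie.1 hr, add_sub_cancel_right]

section Anchor

variable (hσ : ∀ (a : A) (r : R), σ (ι a * r) = Algebra.lmul k A a * σ r)
include hσ

theorem σ_ι (a : A) : σ (ι a) = Algebra.lmul k A a := by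
  simpa using hσ a 1

theorem ι_mul_mem (a : A) {r : R} (hr : r ∈ Prim k ι σ) : ι a * r ∈ Prim k ι σ :=
    mem_iff_lie.2 fun b => by
  have hcomm : ⁅ι a, ι b⁆ = 0 := ((Commute.all a b).map ι).lie_eq
  rw [Ring.mul_lie_left, hcomm, zero_mul, add_zero, mem_iff_lie.1 hr, hσ, Module.End.mul_apply,
    Algebra.coe_lmul_eq_mul, LinearMap.mul_apply', map_mul]

theorem anchor_map_mul {r : R} (hr : r ∈ Prim k ι σ) (a b : A) :
    σ r (a * b) = a * σ r b + σ r a * b := by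
  have h := congrArg (σ · b) (hr a)
  simp only [map_sub, map_mul, σ_ι hσ, LinearMap.sub_apply, Module.End.mul_apply,
    Algebra.coe_lmul_eq_mul, LinearMap.mul_apply'] at h
  linear_combination h

end Anchor

end Prim

end Commutator

theorem stmt_2_general (k A R : Type*) [Field k] [CommRing A] [Algebra k A]
    [Ring R] [Algebra k R] (ι : A →ₐ[k] R) (σ : R →ₐ[k] Module.End k A)
    (hσ : ∀ (a : A) (r : R), σ (ι a * r) = (Algebra.lmul k A a) * σ r) :
    -- (i) P(R) is an A-submodule of R (0 ∈ P(R), closed under + and the A-action)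
    ((0 : R) ∈ Prim k ι σ) ∧
    (∀ r₁ ∈ Prim k ι σ, ∀ r₂ ∈ Prim k ι σ, r₁ + r₂ ∈ Prim k ι σ) ∧
    (∀ a : A, ∀ r ∈ Prim k ι σ, ι a * r ∈ Prim k ι σ) ∧
    -- (ii) P(R) is closed under the commutator bracket
    (∀ r₁ ∈ Prim k ι σ, ∀ r₂ ∈ Prim k ι σ, r₁ * r₂ - r₂ * r₁ ∈ Prim k ι σ) ∧
    -- (iii) σ(r) is a derivation of A for every r ∈ P(R)
    (∀ r ∈ Prim k ι σ, ∀ a b : A, σ r (a * b) = a * σ r b + σ r a * b) ∧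
    -- (iv) the Leibniz identity relating the bracket, the A-action and the anchor
    (∀ r₁ ∈ Prim k ι σ, ∀ (r₂ : R) (a : A),
      (r₁ * (ι a * r₂) - (ι a * r₂) * r₁) - ι a * (r₁ * r₂ - r₂ * r₁) =
        ι (σ r₁ a) * r₂) :=
  ⟨Prim.zero_mem, fun _ h₁ _ h₂ => Prim.add_mem h₁ h₂, fun a _ hr => Prim.ι_mul_mem hσ a hr,
    fun _ h₁ _ h₂ => Prim.lie_mem h₁ h₂, fun _ hr => Prim.anchor_map_mul hσ hr,
    fun _ hr r₂ a => Prim.lie_ι_mul_sub hr a r₂⟩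

/-- Let `(R, ι, σ)` be an object of `alg_{A/End_k(A)}`.  Then the set `P(R)` of primitive
elements is naturally a Lie–Rinehart algebra over `(k,A)`:
(i) `P(R)` is an `A`-submodule of `R`, where `a ∈ A` acts by `r ↦ ι(a)·r`;
(ii) `P(R)` is closed under the commutator bracket `[r₁,r₂] = r₁r₂ − r₂r₁`;
(iii) for every `r ∈ P(R)`, the map `a ↦ σ(r)(a)` is a `k`-linear derivation of `A`;
(iv) for all `r₁ ∈ P(R)`, `r₂ ∈ R` and `a ∈ A` one has
`[r₁, ι(a)·r₂] − ι(a)·[r₁,r₂] = ι(σ(r₁)(a))·r₂`. -/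
theorem stmt_2 (k A R : Type*) [Field k] [CharZero k] [CommRing A] [Algebra k A]
    [Ring R] [Algebra k R] (ι : A →ₐ[k] R) (σ : R →ₐ[k] Module.End k A)
    (hσ : ∀ (a : A) (r : R), σ (ι a * r) = (Algebra.lmul k A a) * σ r) :
    -- (i) P(R) is an A-submodule of R (0 ∈ P(R), closed under + and the A-action)
    ((0 : R) ∈ Prim k ι σ) ∧
    (∀ r₁ ∈ Prim k ι σ, ∀ r₂ ∈ Prim k ι σ, r₁ + r₂ ∈ Prim k ι σ) ∧
    (∀ a : A, ∀ r ∈ Prim k ι σ, ι a * r ∈ Prim k ι σ) ∧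
    -- (ii) P(R) is closed under the commutator bracket
    (∀ r₁ ∈ Prim k ι σ, ∀ r₂ ∈ Prim k ι σ, r₁ * r₂ - r₂ * r₁ ∈ Prim k ι σ) ∧
    -- (iii) σ(r) is a derivation of A for every r ∈ P(R)
    (∀ r ∈ Prim k ι σ, ∀ a b : A, σ r (a * b) = a * σ r b + σ r a * b) ∧
    -- (iv) the Leibniz identity relating the bracket, the A-action and the anchor
    (∀ r₁ ∈ Prim k ι σ, ∀ (r₂ : R) (a : A),
      (r₁ * (ι a * r₂) - (ι a * r₂) * r₁) - ι a * (r₁ * r₂ - r₂ * r₁) =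
        ι (σ r₁ a) * r₂) :=
  stmt_2_general k A R ι σ hσ
end

section
/- Let (R, ι, σ) be an object of alg_{A/End_k(A)}, and let I be the right ideal of R ⊗_k R generated by the elements ι(a)⊗1 − 1⊗ι(a), a ∈ A. Then for every x ∈ P(R) and all a, a' ∈ A: (x⊗1 + 1⊗x)·(ι(a)⊗1 − 1⊗ι(a)) ∈ I and (ι(a')⊗1)·(ι(a)⊗1 − 1⊗ι(a)) ∈ I. Consequently the sub-A-module R̃ of R⊗_k R generated by the elements ι(a)⊗1 (a ∈ A) and x⊗1 + 1⊗x (x ∈ P(R)) is contained in the normalizer of the right ideal I (R̃·I ⊆ I). -/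
open TensorProduct

/-!
Since `ι(a) ⊗ 1` and `x ⊗ 1 + 1 ⊗ x` commute with a generator `ι(a) ⊗ 1 − 1 ⊗ ι(a)` of `I`
up to a bracket which is again `0` or a generator (`ι(σ(x)(a)) ⊗ 1 − 1 ⊗ ι(σ(x)(a))` for
primitive `x`), left multiplication by them maps each generator into `I`, hence all of `I`.
The elements `t` with `t·I ⊆ I` form a subring, which therefore contains `R̃`.
-/

section RightIdealSpan

variable {S κ : Type*} [Ring S]

def rightIdealSpan (g : κ → S) : AddSubgroup S :=
  AddSubgroup.closure {y | ∃ i r, y = g i * r}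

def AddSubgroup.idealizer (I : AddSubgroup S) : Subring S where
  carrier := {t | ∀ x ∈ I, t * x ∈ I}
  mul_mem' {s t} hs ht x hx := by rw [mul_assoc]; exact hs _ (ht x hx)
  one_mem' x hx := by rwa [one_mul]
  add_mem' {s t} hs ht x hx := by rw [add_mul]; exact add_mem (hs x hx) (ht x hx)
  zero_mem' x _ := by rw [zero_mul]; exact zero_mem I
  neg_mem' {s} hs x hx := by rw [neg_mul]; exact neg_mem (hs x hx)

variable {g : κ → S}

theorem mul_mem_rightIdealSpan (i : κ) (r : S) : g i * r ∈ rightIdealSpan g :=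
  AddSubgroup.subset_closure ⟨i, r, rfl⟩

theorem apply_mem_rightIdealSpan (i : κ) : g i ∈ rightIdealSpan g := by
  simpa using mul_mem_rightIdealSpan (g := g) i 1

theorem rightIdealSpan.mul_mem_right {x : S} (hx : x ∈ rightIdealSpan g) (s : S) :
    x * s ∈ rightIdealSpan g := by
  induction hx using AddSubgroup.closure_induction with
  | mem y hy => obtain ⟨i, r, rfl⟩ := hy; rw [mul_assoc]; exact mul_mem_rightIdealSpan i (r * s)
  | zero => rw [zero_mul]; exact zero_mem _
  | add y z _ _ hy hz => rw [add_mul]; exact add_mem hy hz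
  | neg y _ hy => rw [neg_mul]; exact neg_mem hy

theorem mem_idealizer_rightIdealSpan {t : S} :
    t ∈ (rightIdealSpan g).idealizer ↔ ∀ i, t * g i ∈ rightIdealSpan g := by
  refine ⟨fun ht i => ht _ (apply_mem_rightIdealSpan i), fun ht x hx => ?_⟩
  induction hx using AddSubgroup.closure_induction with
  | mem y hy =>
    obtain ⟨i, r, rfl⟩ := hy
    rw [← mul_assoc]; exact rightIdealSpan.mul_mem_right (ht i) r
  | zero => rw [mul_zero]; exact zero_mem _
  | add y z _ _ hy hz => rw [mul_add]; exact add_mem hy hz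
  | neg y _ hy => rw [mul_neg]; exact neg_mem hy

theorem mul_mem_rightIdealSpan_of_lie_mem {t : S} {i : κ} (h : ⁅t, g i⁆ ∈ rightIdealSpan g) :
    t * g i ∈ rightIdealSpan g := by
  rw [← sub_add_cancel (t * g i) (g i * t), ← Ring.lie_def]
  exact add_mem h (mul_mem_rightIdealSpan i t)

end RightIdealSpan

section TensorLie

variable {k R : Type*} [CommRing k] [Ring R] [Algebra k R]

theorem lie_tmul_one_add_one_tmul (x u : R) :
    ⁅x ⊗ₜ[k] (1 : R) + 1 ⊗ₜ[k] x, u ⊗ₜ[k] 1 - 1 ⊗ₜ[k] u⁆ = ⁅x, u⁆ ⊗ₜ[k] 1 - 1 ⊗ₜ[k] ⁅x, u⁆ := by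
  simp only [Ring.lie_def, mul_sub, sub_mul, add_mul, mul_add,
    Algebra.TensorProduct.tmul_mul_tmul, one_mul, mul_one, sub_tmul, tmul_sub]
  abel

theorem lie_tmul_one_sub_one_tmul (u v : R) :
    ⁅u ⊗ₜ[k] (1 : R), v ⊗ₜ[k] 1 - 1 ⊗ₜ[k] v⁆ = ⁅u, v⁆ ⊗ₜ[k] 1 := by
  simp only [Ring.lie_def, mul_sub, sub_mul, Algebra.TensorProduct.tmul_mul_tmul, one_mul,
    mul_one, sub_tmul]
  abel

end TensorLie

theorem stmt_4_general (k A R : Type*) [Field k] [CommRing A] [Algebra k A]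
    [Ring R] [Algebra k R] (ι : A →ₐ[k] R) (σ : R →ₐ[k] Module.End k A) :
    -- `gen a = ι(a)⊗1 − 1⊗ι(a)`
    let gen : A → R ⊗[k] R := fun a => ι a ⊗ₜ[k] (1 : R) - (1 : R) ⊗ₜ[k] ι a
    -- `I` is the right ideal generated by the `gen a`
    let I : AddSubgroup (R ⊗[k] R) :=
      AddSubgroup.closure {y | ∃ (a : A) (r : R ⊗[k] R), y = gen a * r}
    -- `R̃` is the sub-A-module generated by the `ι(a)⊗1` and the `x⊗1 + 1⊗x`, `x ∈ P(R)`
    let Rt : AddSubgroup (R ⊗[k] R) :=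
      AddSubgroup.closure {y | ∃ a : A,
        (∃ b : A, y = (ι a ⊗ₜ[k] (1 : R)) * (ι b ⊗ₜ[k] (1 : R))) ∨
        (∃ x ∈ Prim k ι σ,
          y = (ι a ⊗ₜ[k] (1 : R)) * (x ⊗ₜ[k] (1 : R) + (1 : R) ⊗ₜ[k] x))}
    (∀ x ∈ Prim k ι σ, ∀ a : A,
      (x ⊗ₜ[k] (1 : R) + (1 : R) ⊗ₜ[k] x) * gen a ∈ I) ∧
    (∀ a' a : A, (ι a' ⊗ₜ[k] (1 : R)) * gen a ∈ I) ∧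
    (∀ r ∈ Rt, ∀ i ∈ I, r * i ∈ I) := by
  intro gen I Rt
  have prim (x : R) (hx : x ∈ Prim k ι σ) (a : A) :
      (x ⊗ₜ[k] (1 : R) + (1 : R) ⊗ₜ[k] x) * gen a ∈ I := by
    refine mul_mem_rightIdealSpan_of_lie_mem (g := gen) ?_
    rw [lie_tmul_one_add_one_tmul, Ring.lie_def, hx a]
    exact apply_mem_rightIdealSpan (σ x a)
  have comm (a' a : A) : (ι a' ⊗ₜ[k] (1 : R)) * gen a ∈ I := by
    refine mul_mem_rightIdealSpan_of_lie_mem (g := gen) ?_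
    rw [lie_tmul_one_sub_one_tmul, commute_iff_lie_eq.1 ((Commute.all a' a).map ι),
      zero_tmul]
    exact zero_mem I
  have hRt : Rt ≤ I.idealizer.toAddSubgroup := by
    refine (AddSubgroup.closure_le _).2 ?_
    rintro y ⟨a, ⟨b, rfl⟩ | ⟨x, hx, rfl⟩⟩
    · exact I.idealizer.mul_mem (mem_idealizer_rightIdealSpan.2 (comm a))
        (mem_idealizer_rightIdealSpan.2 (comm b))
    · exact I.idealizer.mul_mem (mem_idealizer_rightIdealSpan.2 (comm a))
        (mem_idealizer_rightIdealSpan.2 (prim x hx))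
  exact ⟨prim, comm, fun r hr => hRt hr⟩

/-- Let `(R, ι, σ)` be an object of `alg_{A/End_k(A)}`, and let `I` be the right ideal of
`R ⊗_k R` generated by the elements `ι(a)⊗1 − 1⊗ι(a)`, `a ∈ A`.  Then for every
`x ∈ P(R)` and all `a, a' ∈ A`:
`(x⊗1 + 1⊗x)·(ι(a)⊗1 − 1⊗ι(a)) ∈ I` and `(ι(a')⊗1)·(ι(a)⊗1 − 1⊗ι(a)) ∈ I`.
Consequently the sub-`A`-module `R̃` of `R⊗_k R` generated by the elements `ι(a)⊗1`
(`a ∈ A`) and `x⊗1 + 1⊗x` (`x ∈ P(R)`) — with `A` acting by left multiplication by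
`ι(a)⊗1` — is contained in the normalizer of the right ideal `I` (`R̃·I ⊆ I`). -/
theorem stmt_4 (k A R : Type*) [Field k] [CharZero k] [CommRing A] [Algebra k A]
    [Ring R] [Algebra k R] (ι : A →ₐ[k] R) (σ : R →ₐ[k] Module.End k A)
    (hσ : ∀ (a : A) (r : R), σ (ι a * r) = (Algebra.lmul k A a) * σ r) :
    -- `gen a = ι(a)⊗1 − 1⊗ι(a)`
    let gen : A → R ⊗[k] R := fun a => ι a ⊗ₜ[k] (1 : R) - (1 : R) ⊗ₜ[k] ι a
    -- `I` is the right ideal generated by the `gen a`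
    let I : AddSubgroup (R ⊗[k] R) :=
      AddSubgroup.closure {y | ∃ (a : A) (r : R ⊗[k] R), y = gen a * r}
    -- `R̃` is the sub-A-module generated by the `ι(a)⊗1` and the `x⊗1 + 1⊗x`, `x ∈ P(R)`
    let Rt : AddSubgroup (R ⊗[k] R) :=
      AddSubgroup.closure {y | ∃ a : A,
        (∃ b : A, y = (ι a ⊗ₜ[k] (1 : R)) * (ι b ⊗ₜ[k] (1 : R))) ∨
        (∃ x ∈ Prim k ι σ,
          y = (ι a ⊗ₜ[k] (1 : R)) * (x ⊗ₜ[k] (1 : R) + (1 : R) ⊗ₜ[k] x))}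
    (∀ x ∈ Prim k ι σ, ∀ a : A,
      (x ⊗ₜ[k] (1 : R) + (1 : R) ⊗ₜ[k] x) * gen a ∈ I) ∧
    (∀ a' a : A, (ι a' ⊗ₜ[k] (1 : R)) * gen a ∈ I) ∧
    (∀ r ∈ Rt, ∀ i ∈ I, r * i ∈ I) :=
  stmt_4_general k A R ι σ
end

section
/- Let (V,ρ) be an anchored A-module. The map χ : V^* × A → V^* × A defined by χ(θ, a) = (ρ^*(da) − θ, a), where ρ^*(da) is the A-linear form v ↦ ρ(v)(a), is an involution (χ ∘ χ = id) that interchanges the two A-actions on Σ_V^*: χ(a'·x) = χ(x)·a' and χ(x·a') = a'·χ(x) for all a' ∈ A and x ∈ Σ_V^*. Hence Σ_V^* is a symmetric bimodule, i.e. isomorphic to its opposite bimodule. -/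
/-- For an anchored `A`-module `(V, ρ)` and `a ∈ A`, the `A`-linear form
`ρ^*(da) : V → A`, `v ↦ ρ(v)(a)`. -/
def rhoStar {k A V : Type*} [CommRing k] [CommRing A] [Algebra k A]
    [AddCommGroup V] [Module A V] (ρ : V →ₗ[A] Derivation k A A) (a : A) :
    V →ₗ[A] A where
  toFun v := ρ v a
  map_add' v w := by simp
  map_smul' c v := by simp

/-- The right `A`-action on `Σ_V^* = V^* × A`: `(θ,a)·a' = (a'•θ, aa')`. -/
def rActStar {k A V : Type*} [CommRing k] [CommRing A] [Algebra k A]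
    [AddCommGroup V] [Module A V] (_ρ : V →ₗ[A] Derivation k A A)
    (x : (V →ₗ[A] A) × A) (a' : A) : (V →ₗ[A] A) × A :=
  (a' • x.1, x.2 * a')

/-- The (twisted) left `A`-action on `Σ_V^* = V^* × A`:
`a'·(θ,a) = (a'•θ + a•ρ^*(da'), a'a)`. -/
def lActStar {k A V : Type*} [CommRing k] [CommRing A] [Algebra k A]
    [AddCommGroup V] [Module A V] (ρ : V →ₗ[A] Derivation k A A)
    (a' : A) (x : (V →ₗ[A] A) × A) : (V →ₗ[A] A) × A :=
  (a' • x.1 + x.2 • rhoStar ρ a', a' * x.2)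

/-- The map `χ : Σ_V^* → Σ_V^*`, `χ(θ, a) = (ρ^*(da) − θ, a)`. -/
def chiMap {k A V : Type*} [CommRing k] [CommRing A] [Algebra k A]
    [AddCommGroup V] [Module A V] (ρ : V →ₗ[A] Derivation k A A)
    (x : (V →ₗ[A] A) × A) : (V →ₗ[A] A) × A :=
  (rhoStar ρ x.2 - x.1, x.2)

/-- Let `(V,ρ)` be an anchored `A`-module.  The map `χ : V^* × A → V^* × A` defined by
`χ(θ, a) = (ρ^*(da) − θ, a)` is an involution that interchanges the two `A`-actions on
`Σ_V^*`: `χ(a'·x) = χ(x)·a'` and `χ(x·a') = a'·χ(x)`.  Hence `Σ_V^*` is a symmetric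
bimodule, i.e. isomorphic to its opposite bimodule. -/
theorem stmt_6 (k A V : Type*) [Field k] [CharZero k] [CommRing A] [Algebra k A]
    [AddCommGroup V] [Module A V] (ρ : V →ₗ[A] Derivation k A A) :
    (∀ x : (V →ₗ[A] A) × A, chiMap ρ (chiMap ρ x) = x) ∧
    (∀ (a' : A) (x : (V →ₗ[A] A) × A),
      chiMap ρ (lActStar ρ a' x) = rActStar ρ (chiMap ρ x) a') ∧
    (∀ (a' : A) (x : (V →ₗ[A] A) × A),
      chiMap ρ (rActStar ρ x a') = lActStar ρ a' (chiMap ρ x)) := by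
  have key : ∀ a b : A, rhoStar ρ (a * b) = a • rhoStar ρ b + b • rhoStar ρ a := by
    intro a b; ext v
    simp [rhoStar, mul_comm, smul_eq_mul]
  refine ⟨fun x => ?_, fun a' x => ?_, fun a' x => ?_⟩
  · simp [chiMap]
  · simp only [chiMap, lActStar, rActStar, key, mul_comm]
    ext v <;> simp [smul_sub, smul_eq_mul]
  · simp only [chiMap, lActStar, rActStar, key, mul_comm]
    ext v
    · simp [smul_sub, smul_eq_mul]; ring
    · simp
end

section
/- Let (V,ρ) be an anchored A-module with V finitely generated and projective over A, and let M be any A-module. Form M^* ⊗_A Σ_V^*, the tensor product balanced against the twisted left A-action on Σ_V^* and made into an A-module via the right A-action on Σ_V^*. Then: (1) the A-linear dual of the Atiyah sequence of M, namely 0 → (V ⊗_A M)^* → (Σ_V ⊗_A M)^* → M^* → 0 (maps obtained by precomposition), is a short exact sequence; (2) the sequence 0 → M^* ⊗_A V^* → M^* ⊗_A Σ_V^* → M^* → 0, with maps δ⊗θ ↦ δ⊗(θ,0) and δ⊗(θ,a) ↦ a•δ, is a short exact sequence; (3) the formula Θ(δ⊗(θ,b))((a,v)⊗m) = (b·a +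 θ(v))·δ(m) + b·ρ(v)(δ(m)) defines a well-defined A-linear isomorphism Θ : M^* ⊗_A Σ_V^* → (Σ_V ⊗_A M)^*, which, together with the canonical isomorphism M^* ⊗_A V^* ≅ (V ⊗_A M)^* and the identity of M^*, is an isomorphism between the short exact sequences of (2) and (1). -/
/-!
Modulo the image of `M`, the class of `(a, v) ⊗ m ∈ Σ_V ⊗_A M` depends only on `v ⊗ m`, so
`M → Σ_V ⊗_A M → V ⊗_A M → 0` is exact and its dual is left exact; the dual of `M → Σ_V ⊗_A M`
is onto because `Θ(δ ⊗ (0, 1))` extends `δ`. In `M^* ⊗_A Σ_V^*` the twisted balancing gives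
`bδ ⊗ (0, 1) = δ ⊗ (ρ^*(db), b)`, so every element is `δ' ⊗ (0, 1)` plus an element of the
image of `M^* ⊗_A V^*`, which is exactness of (2) in the middle. A finite dual basis of `V`
inverts the canonical map `M^* ⊗_A V^* → (V ⊗_A M)^*`; the left square then makes
`M^* ⊗_A V^* → M^* ⊗_A Σ_V^*` injective, and the five lemma makes `Θ` bijective.
-/

open TensorProduct

universe u

theorem Function.Exact.dualMap {R M N P : Type*} [CommRing R] [AddCommGroup M] [Module R M]
    [AddCommGroup N] [Module R N] [AddCommGroup P] [Module R P]
    {f : M →ₗ[R] N} {g : N →ₗ[R] P} (hfg : Function.Exact f g) (hg : Function.Surjective g) :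
    Function.Exact g.dualMap f.dualMap := by
  rw [LinearMap.exact_iff, LinearMap.ker_dualMap_eq_dualAnnihilator_range,
    LinearMap.range_dualMap_eq_dualAnnihilator_ker_of_surjective g hg,
    LinearMap.exact_iff.mp hfg]

theorem LinearMap.bijective_of_shortExact_ladder {R : Type*} [CommRing R]
    {M₁ M₂ M₃ N₁ N₂ N₃ : Type*} [AddCommGroup M₁] [AddCommGroup M₂] [AddCommGroup M₃]
    [AddCommGroup N₁] [AddCommGroup N₂] [AddCommGroup N₃] [Module R M₁] [Module R M₂]
    [Module R M₃] [Module R N₁] [Module R N₂] [Module R N₃]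
    {f₁ : M₁ →ₗ[R] M₂} {f₂ : M₂ →ₗ[R] M₃} {g₁ : N₁ →ₗ[R] N₂} {g₂ : N₂ →ₗ[R] N₃}
    {i₁ : M₁ →ₗ[R] N₁} {i₂ : M₂ →ₗ[R] N₂} {i₃ : M₃ →ₗ[R] N₃}
    (hc₁ : g₁ ∘ₗ i₁ = i₂ ∘ₗ f₁) (hc₂ : g₂ ∘ₗ i₂ = i₃ ∘ₗ f₂)
    (hf₁ : Function.Injective f₁) (hf : Function.Exact f₁ f₂) (hf₂ : Function.Surjective f₂)
    (hg₁ : Function.Injective g₁) (hg : Function.Exact g₁ g₂)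
    (hi₁ : Function.Bijective i₁) (hi₃ : Function.Bijective i₃) : Function.Bijective i₂ := by
  have hg₂ : Function.Surjective g₂ :=
    .of_comp (g := i₂) (by rw [← coe_comp, hc₂, coe_comp]; exact hi₃.2.comp hf₂)
  exact bijective_of_surjective_of_bijective_of_bijective_of_injective
    (0 : Unit →ₗ[R] M₁) f₁ f₂ (0 : M₃ →ₗ[R] Unit) (0 : Unit →ₗ[R] N₁) g₁ g₂ (0 : N₃ →ₗ[R] Unit)
    0 i₁ i₂ i₃ 0 (by simp) hc₁ hc₂ (by simp) ((exact_zero_iff_injective _ _).2 hf₁) hf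
    ((exact_zero_iff_surjective _ _).2 hf₂) ((exact_zero_iff_injective _ _).2 hg₁) hg
    ((exact_zero_iff_surjective _ _).2 hg₂) (fun _ => ⟨0, rfl⟩) hi₁ hi₃ (fun _ _ _ => rfl)

theorem Module.exists_finite_dual_basis (R P : Type*) [CommRing R] [AddCommGroup P] [Module R P]
    [Module.Finite R P] [Module.Projective R P] :
    ∃ (n : ℕ) (x : Fin n → P) (c : Fin n → Module.Dual R P), ∀ v, ∑ i, c i v • x i = v := by
  classical
  obtain ⟨n, f, g, -, -, hfg⟩ := Module.Finite.exists_comp_eq_id_of_projective R P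
  refine ⟨n, fun i => f (Pi.single i 1), fun i => LinearMap.proj i ∘ₗ g, fun v => ?_⟩
  conv_rhs => rw [← LinearMap.id_apply (R := R) v, ← hfg, LinearMap.comp_apply,
    pi_eq_sum_univ' (g v), map_sum]
  simp

theorem dualTensor_bijective_of_projective {A V M : Type*} [CommRing A] [AddCommGroup V]
    [Module A V] [Module.Finite A V] [Module.Projective A V] [AddCommGroup M] [Module A M]
    (can : Module.Dual A M ⊗[A] Module.Dual A V →ₗ[A] Module.Dual A (V ⊗[A] M))
    (hcan : ∀ δ θ v m, can (δ ⊗ₜ θ) (v ⊗ₜ m) = θ v * δ m) : Function.Bijective can := by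
  obtain ⟨n, x, c, hxc⟩ := Module.exists_finite_dual_basis A V
  let inv : Module.Dual A (V ⊗[A] M) →ₗ[A] Module.Dual A M ⊗[A] Module.Dual A V :=
    ∑ i, (TensorProduct.mk A _ _).flip (c i) ∘ₗ (TensorProduct.mk A V M (x i)).dualMap
  have inv_apply : ∀ h, inv h = ∑ i, (h ∘ₗ TensorProduct.mk A V M (x i)) ⊗ₜ c i := fun h => by
    simp [inv, LinearMap.dualMap_apply']
  have can_inv : can ∘ₗ inv = .id := by
    refine LinearMap.ext fun h => TensorProduct.ext' fun v m => ?_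
    rw [LinearMap.comp_apply, inv_apply, map_sum, LinearMap.sum_apply, LinearMap.id_apply]
    conv_rhs => rw [← hxc v, TensorProduct.sum_tmul, map_sum]
    refine Finset.sum_congr rfl fun i _ => ?_
    rw [hcan, ← smul_tmul', map_smul, smul_eq_mul, LinearMap.comp_apply, mk_apply]
  have inv_can : inv ∘ₗ can = .id := by
    refine TensorProduct.ext' fun δ θ => ?_
    have restrict : ∀ i, can (δ ⊗ₜ θ) ∘ₗ TensorProduct.mk A V M (x i) = θ (x i) • δ :=
      fun i => LinearMap.ext fun m => by simp [hcan]
    simp_rw [LinearMap.comp_apply, inv_apply, restrict, smul_tmul, ← tmul_sum]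
    congr 1
    refine LinearMap.ext fun v => ?_
    conv_rhs => rw [← hxc v, map_sum]
    simp [mul_comm]
  exact Function.bijective_iff_has_inverse.2
    ⟨inv, fun z => congr($inv_can z), fun h => congr($can_inv h)⟩

section Atiyah

variable {k A V M T T2 : Type u} [CommRing k] [CommRing A] [Algebra k A]
  [AddCommGroup V] [Module A V] [AddCommGroup M] [Module A M]
  [AddCommGroup T] [Module A T] [AddCommGroup T2] [Module A T2]

@[simp]
theorem rhoStar_apply (ρ : V →ₗ[A] Derivation k A A) (a : A) (v : V) : rhoStar ρ a v = ρ v a :=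
  rfl

/-- `tt s m` stands for `s ⊗ m ∈ Σ_V ⊗_A M`. -/
structure IsAtiyahTensor (ρ : V →ₗ[A] Derivation k A A) (tt : A × V → M → T) : Prop where
  add_left : ∀ (s s' : A × V) (m : M), tt (s + s') m = tt s m + tt s' m
  add_right : ∀ (s : A × V) (m m' : M), tt s (m + m') = tt s m + tt s m'
  balanced : ∀ (b a : A) (v : V) (m : M), tt (b * a + ρ v a, a • v) m = tt (b, v) (a • m)
  smul : ∀ (a b : A) (v : V) (m : M), a • tt (b, v) m = tt (a * b, a • v) m
  univ : ∀ (N : Type u) [AddCommGroup N] (f : A × V → M → N),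
    (∀ (s s' : A × V) (m : M), f (s + s') m = f s m + f s' m) →
    (∀ (s : A × V) (m m' : M), f s (m + m') = f s m + f s m') →
    (∀ (b a : A) (v : V) (m : M), f (b * a + ρ v a, a • v) m = f (b, v) (a • m)) →
    ∃! F : T →+ N, ∀ s m, F (tt s m) = f s m

/-- `tt2 δ x` stands for `δ ⊗ x ∈ M^* ⊗_A Σ_V^*`. -/
structure IsDualAtiyahTensor (ρ : V →ₗ[A] Derivation k A A)
    (tt2 : Module.Dual A M → (V →ₗ[A] A) × A → T2) : Prop where
  add_left : ∀ (δ δ' : Module.Dual A M) (x : (V →ₗ[A] A) × A),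
    tt2 (δ + δ') x = tt2 δ x + tt2 δ' x
  add_right : ∀ (δ : Module.Dual A M) (x x' : (V →ₗ[A] A) × A),
    tt2 δ (x + x') = tt2 δ x + tt2 δ x'
  balanced : ∀ (a : A) (δ : Module.Dual A M) (θ : V →ₗ[A] A) (b : A),
    tt2 (a • δ) (θ, b) = tt2 δ (a • θ + b • rhoStar ρ a, a * b)
  smul : ∀ (a : A) (δ : Module.Dual A M) (θ : V →ₗ[A] A) (b : A),
    a • tt2 δ (θ, b) = tt2 δ (a • θ, b * a)
  univ : ∀ (N : Type u) [AddCommGroup N] (f : Module.Dual A M → (V →ₗ[A] A) × A → N),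
    (∀ δ δ' x, f (δ + δ') x = f δ x + f δ' x) →
    (∀ δ x x', f δ (x + x') = f δ x + f δ x') →
    (∀ (a : A) (δ : Module.Dual A M) (θ : V →ₗ[A] A) (b : A),
      f (a • δ) (θ, b) = f δ (a • θ + b • rhoStar ρ a, a * b)) →
    ∃! F : T2 →+ N, ∀ δ x, F (tt2 δ x) = f δ x

/-- The value of `Θ (δ ⊗ (θ, b))` at `s ⊗ m`. -/
def atiyahPairing (ρ : V →ₗ[A] Derivation k A A) (δ : Module.Dual A M) (θ : V →ₗ[A] A) (b : A)
    (s : A × V) (m : M) : A :=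
  (b * s.1 + θ s.2) * δ m + b * ρ s.2 (δ m)

variable {ρ : V →ₗ[A] Derivation k A A}

namespace IsAtiyahTensor

variable {tt : A × V → M → T}

theorem addHom_ext (h : IsAtiyahTensor ρ tt) {N : Type u} [AddCommGroup N] {F G : T →+ N}
    (hFG : ∀ s m, F (tt s m) = G (tt s m)) : F = G := by
  obtain ⟨_, _, huniq⟩ := h.univ N (fun s m => F (tt s m))
    (fun s s' m => by rw [h.add_left, map_add]) (fun s m m' => by rw [h.add_right, map_add])
    (fun b a v m => by rw [h.balanced])
  exact (huniq F fun _ _ => rfl).trans (huniq G fun s m => (hFG s m).symm).symm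

theorem linearMap_ext (h : IsAtiyahTensor ρ tt) {N : Type u} [AddCommGroup N] [Module A N]
    {F G : T →ₗ[A] N} (hFG : ∀ s m, F (tt s m) = G (tt s m)) : F = G :=
  LinearMap.toAddMonoidHom_injective (h.addHom_ext hFG)

theorem exists_linearMap (h : IsAtiyahTensor ρ tt) {N : Type u} [AddCommGroup N] [Module A N]
    (f : A × V → M → N)
    (hadd_left : ∀ (s s' : A × V) (m : M), f (s + s') m = f s m + f s' m)
    (hadd_right : ∀ (s : A × V) (m m' : M), f s (m + m') = f s m + f s m')
    (hbal : ∀ (b a : A) (v : V) (m : M), f (b * a + ρ v a, a • v) m = f (b, v) (a • m))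
    (hsmul : ∀ (a b : A) (v : V) (m : M), f (a * b, a • v) m = a • f (b, v) m) :
    ∃ F : T →ₗ[A] N, ∀ s m, F (tt s m) = f s m := by
  obtain ⟨F, hF, -⟩ := h.univ N f hadd_left hadd_right hbal
  have hF_smul : ∀ (a : A) (t : T), F (a • t) = a • F t := fun a t =>
    DFunLike.congr_fun (h.addHom_ext (F := F.comp (DistribSMul.toAddMonoidHom T a))
      (G := (DistribSMul.toAddMonoidHom N a).comp F)
      fun ⟨b, v⟩ m => by simp [h.smul, hF, hsmul]) t
  exact ⟨{ toFun := F, map_add' := F.map_add, map_smul' := hF_smul }, hF⟩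

theorem apply_eq_add_smul (h : IsAtiyahTensor ρ tt) (a : A) (v : V) (m : M) :
    tt (a, v) m = tt (0, v) m + a • tt (1, 0) m := by
  rw [h.smul, mul_one, smul_zero, ← h.add_left, Prod.mk_add_mk, zero_add, add_zero]

theorem exact (h : IsAtiyahTensor ρ tt) {unitT : M →ₗ[A] T}
    (hunit : ∀ m, unitT m = tt (1, 0) m) {piT : T →ₗ[A] V ⊗[A] M}
    (hpi : ∀ a v m, piT (tt (a, v) m) = v ⊗ₜ m) : Function.Exact unitT piT := by
  let q := (LinearMap.range unitT).mkQ
  have q_smul_one : ∀ (a : A) (m : M), q (a • tt (1, 0) m) = 0 := fun a m =>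
    (Submodule.Quotient.mk_eq_zero _).2 (Submodule.smul_mem _ a ⟨m, hunit m⟩)
  have hq : ∀ a v m, q (tt (a, v) m) = q (tt (0, v) m) := fun a v m => by
    rw [h.apply_eq_add_smul a v m, map_add, q_smul_one, add_zero]
  have hq_smul : ∀ (a : A) v m, q (tt (0, a • v) m) = a • q (tt (0, v) m) := fun a v m => by
    rw [← map_smul, h.smul, mul_zero]
  -- `v ⊗ m ↦ [(0, v) ⊗ m]` is balanced modulo the image of `M`
  let ψ : V →ₗ[A] M →ₗ[A] T ⧸ LinearMap.range unitT :=
    LinearMap.mk₂ A (fun v m => q (tt (0, v) m))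
      (fun v v' m => by rw [← map_add, ← h.add_left, Prod.mk_add_mk, add_zero]) hq_smul
      (fun v m m' => by rw [h.add_right, map_add])
      (fun a v m => by rw [← h.balanced, zero_mul, hq, hq_smul])
  have hψ : TensorProduct.lift ψ ∘ₗ piT = q :=
    h.linearMap_ext fun ⟨a, v⟩ m => by simp [ψ, hpi, hq]
  refine LinearMap.exact_of_comp_of_mem_range ?_ fun t ht => ?_
  · exact LinearMap.ext fun m => by simp [hunit, hpi]
  · have hqt : q t = 0 := by rw [← hψ, LinearMap.comp_apply, ht, map_zero]
    exact (Submodule.Quotient.mk_eq_zero _).1 hqt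

theorem exists_dual_eq_atiyahPairing (h : IsAtiyahTensor ρ tt) (δ : Module.Dual A M)
    (θ : V →ₗ[A] A) (b : A) :
    ∃ F : Module.Dual A T, ∀ s m, F (tt s m) = atiyahPairing ρ δ θ b s m := by
  refine h.exists_linearMap _ ?_ ?_ ?_ ?_ <;> intros <;>
    simp only [atiyahPairing, Prod.fst_add, Prod.snd_add, map_add, map_smul, Derivation.add_apply,
      Derivation.smul_apply, smul_eq_mul, Derivation.leibniz] <;> ring

end IsAtiyahTensor

namespace IsDualAtiyahTensor

variable {tt2 : Module.Dual A M → (V →ₗ[A] A) × A → T2}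

theorem addHom_ext (h : IsDualAtiyahTensor ρ tt2) {N : Type u} [AddCommGroup N] {F G : T2 →+ N}
    (hFG : ∀ δ x, F (tt2 δ x) = G (tt2 δ x)) : F = G := by
  obtain ⟨_, _, huniq⟩ := h.univ N (fun δ x => F (tt2 δ x))
    (fun δ δ' x => by rw [h.add_left, map_add]) (fun δ x x' => by rw [h.add_right, map_add])
    (fun a δ θ b => by rw [h.balanced])
  exact (huniq F fun _ _ => rfl).trans (huniq G fun δ x => (hFG δ x).symm).symm

theorem linearMap_ext (h : IsDualAtiyahTensor ρ tt2) {N : Type u} [AddCommGroup N] [Module A N]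
    {F G : T2 →ₗ[A] N} (hFG : ∀ δ x, F (tt2 δ x) = G (tt2 δ x)) : F = G :=
  LinearMap.toAddMonoidHom_injective (h.addHom_ext hFG)

theorem exists_linearMap (h : IsDualAtiyahTensor ρ tt2) {N : Type u} [AddCommGroup N]
    [Module A N] (f : Module.Dual A M → (V →ₗ[A] A) × A → N)
    (hadd_left : ∀ δ δ' x, f (δ + δ') x = f δ x + f δ' x)
    (hadd_right : ∀ δ x x', f δ (x + x') = f δ x + f δ x')
    (hbal : ∀ (a : A) (δ : Module.Dual A M) (θ : V →ₗ[A] A) (b : A),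
      f (a • δ) (θ, b) = f δ (a • θ + b • rhoStar ρ a, a * b))
    (hsmul : ∀ (a : A) (δ : Module.Dual A M) (θ : V →ₗ[A] A) (b : A),
      f δ (a • θ, b * a) = a • f δ (θ, b)) :
    ∃ F : T2 →ₗ[A] N, ∀ δ x, F (tt2 δ x) = f δ x := by
  obtain ⟨F, hF, -⟩ := h.univ N f hadd_left hadd_right hbal
  have hF_smul : ∀ (a : A) (y : T2), F (a • y) = a • F y := fun a y =>
    DFunLike.congr_fun (h.addHom_ext (F := F.comp (DistribSMul.toAddMonoidHom T2 a))
      (G := (DistribSMul.toAddMonoidHom N a).comp F)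
      fun δ ⟨θ, b⟩ => by simp [h.smul, hF, hsmul]) y
  exact ⟨{ toFun := F, map_add' := F.map_add, map_smul' := hF_smul }, hF⟩

theorem mem_of_forall_mem (h : IsDualAtiyahTensor ρ tt2) {P : AddSubgroup T2}
    (hP : ∀ δ x, tt2 δ x ∈ P) (y : T2) : y ∈ P :=
  (QuotientAddGroup.eq_zero_iff y).1 <| DFunLike.congr_fun
    (h.addHom_ext (F := QuotientAddGroup.mk' P) (G := 0)
      fun δ x => (QuotientAddGroup.eq_zero_iff _).2 (hP δ x)) y

theorem exact (h : IsDualAtiyahTensor ρ tt2)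
    {map1 : Module.Dual A M ⊗[A] (V →ₗ[A] A) →ₗ[A] T2}
    (hmap1 : ∀ δ θ, map1 (δ ⊗ₜ θ) = tt2 δ (θ, 0)) {map2 : T2 →ₗ[A] Module.Dual A M}
    (hmap2 : ∀ δ θ b, map2 (tt2 δ (θ, b)) = b • δ) : Function.Exact map1 map2 := by
  let σ : Module.Dual A M →+ T2 := AddMonoidHom.mk' (tt2 · (0, 1)) (h.add_left · · _)
  -- `δ ⊗ (θ, b) = δ ⊗ (θ - ρ^*(db), 0) + bδ ⊗ (0, 1)`
  have hdecomp : ∀ y, y - σ (map2 y) ∈ LinearMap.range map1 := by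
    refine h.mem_of_forall_mem (P := (LinearMap.range map1).toAddSubgroup.comap
      (AddMonoidHom.id T2 - σ.comp map2.toAddMonoidHom))
      fun δ ⟨θ, b⟩ => ⟨δ ⊗ₜ (θ - rhoStar ρ b), ?_⟩
    have hσ : σ (b • δ) = tt2 δ (rhoStar ρ b, b) := by simp [σ, h.balanced]
    change map1 _ = tt2 δ (θ, b) - σ (map2 (tt2 δ (θ, b)))
    rw [hmap2, hσ, hmap1, eq_sub_iff_add_eq, ← h.add_right, Prod.mk_add_mk, sub_add_cancel,
      zero_add]
  refine LinearMap.exact_of_comp_of_mem_range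
    (TensorProduct.ext' fun δ θ => by simp [hmap1, hmap2]) fun y hy => ?_
  simpa [hy] using hdecomp y

end IsDualAtiyahTensor

variable {tt : A × V → M → T} {tt2 : Module.Dual A M → (V →ₗ[A] A) × A → T2}

theorem IsDualAtiyahTensor.exists_linearMap_atiyahPairing (hT2 : IsDualAtiyahTensor ρ tt2)
    (hT : IsAtiyahTensor ρ tt) : ∃ Θ : T2 →ₗ[A] Module.Dual A T,
      ∀ δ θ b s m, Θ (tt2 δ (θ, b)) (tt s m) = atiyahPairing ρ δ θ b s m := by
  choose Φ hΦ using hT.exists_dual_eq_atiyahPairing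
  obtain ⟨Θ, hΘ⟩ : ∃ Θ : T2 →ₗ[A] Module.Dual A T, ∀ δ x, Θ (tt2 δ x) = Φ δ x.1 x.2 := by
    refine hT2.exists_linearMap _ ?_ ?_ ?_ ?_ <;> intros <;>
      refine hT.linearMap_ext fun _ _ => ?_ <;>
      simp only [hΦ, atiyahPairing, Prod.fst_add, Prod.snd_add, map_add, LinearMap.add_apply,
        LinearMap.smul_apply, rhoStar_apply, smul_eq_mul, Derivation.leibniz] <;> ring
  exact ⟨Θ, fun δ θ b s m => by rw [hΘ, hΦ]⟩

variable {Θ : T2 →ₗ[A] Module.Dual A T}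

theorem IsAtiyahTensor.comp_map1_eq_dualMap_comp (hT : IsAtiyahTensor ρ tt)
    (hΘ : ∀ δ θ b s m, Θ (tt2 δ (θ, b)) (tt s m) = atiyahPairing ρ δ θ b s m)
    {map1 : Module.Dual A M ⊗[A] (V →ₗ[A] A) →ₗ[A] T2}
    (hmap1 : ∀ δ θ, map1 (δ ⊗ₜ θ) = tt2 δ (θ, 0)) {piT : T →ₗ[A] V ⊗[A] M}
    (hpi : ∀ a v m, piT (tt (a, v) m) = v ⊗ₜ m)
    {can : Module.Dual A M ⊗[A] (V →ₗ[A] A) →ₗ[A] Module.Dual A (V ⊗[A] M)}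
    (hcan : ∀ δ θ v m, can (δ ⊗ₜ θ) (v ⊗ₜ m) = θ v * δ m) :
    Θ ∘ₗ map1 = piT.dualMap ∘ₗ can :=
  TensorProduct.ext' fun δ θ => hT.linearMap_ext fun ⟨a, v⟩ m => by
    simp [hmap1, hΘ, hpi, hcan, atiyahPairing]

theorem IsDualAtiyahTensor.dualMap_comp_eq_map2 (hT2 : IsDualAtiyahTensor ρ tt2)
    (hΘ : ∀ δ θ b s m, Θ (tt2 δ (θ, b)) (tt s m) = atiyahPairing ρ δ θ b s m)
    {unitT : M →ₗ[A] T} (hunit : ∀ m, unitT m = tt (1, 0) m) {map2 : T2 →ₗ[A] Module.Dual A M}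
    (hmap2 : ∀ δ θ b, map2 (tt2 δ (θ, b)) = b • δ) :
    unitT.dualMap ∘ₗ Θ = map2 :=
  hT2.linearMap_ext fun δ ⟨θ, b⟩ => LinearMap.ext fun m => by
    simp [hunit, hΘ, hmap2, atiyahPairing]

end Atiyah

theorem stmt_9_general (k A V M T T2 : Type u) [Field k] [CommRing A] [Algebra k A]
    [AddCommGroup V] [Module A V] [Module.Finite A V] [Module.Projective A V]
    [AddCommGroup M] [Module A M]
    [AddCommGroup T] [Module A T] [AddCommGroup T2] [Module A T2]
    (ρ : V →ₗ[A] Derivation k A A)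
    -- `T` realizes `Σ_V ⊗_A M` with the `A`-structure from the left action on `Σ_V`
    (tt : (A × V) → M → T)
    (tt_addl : ∀ (s s' : A × V) (m : M), tt (s + s') m = tt s m + tt s' m)
    (tt_addr : ∀ (s : A × V) (m m' : M), tt s (m + m') = tt s m + tt s m')
    (tt_bal : ∀ (b a : A) (v : V) (m : M),
      tt (b * a + ρ v a, a • v) m = tt (b, v) (a • m))
    (tt_mod : ∀ (a b : A) (v : V) (m : M), a • tt (b, v) m = tt (a * b, a • v) m)
    (tt_univ : ∀ (N : Type u) [AddCommGroup N] (f : (A × V) → M → N),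
      (∀ (s s' : A × V) (m : M), f (s + s') m = f s m + f s' m) →
      (∀ (s : A × V) (m m' : M), f s (m + m') = f s m + f s m') →
      (∀ (b a : A) (v : V) (m : M), f (b * a + ρ v a, a • v) m = f (b, v) (a • m)) →
      ∃! F : T →+ N, ∀ s m, F (tt s m) = f s m)
    -- the two maps of the Atiyah sequence of `M`
    (unitT : M →ₗ[A] T) (hunit : ∀ m : M, unitT m = tt (1, 0) m)
    (piT : T →ₗ[A] V ⊗[A] M)
    (hpi : ∀ (a : A) (v : V) (m : M), piT (tt (a, v) m) = v ⊗ₜ[A] m)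
    -- `T2` realizes `M^* ⊗_A Σ_V^*`, balanced against the twisted left `A`-action on
    -- `Σ_V^*`, with the `A`-module structure from the natural right `A`-action
    (tt2 : Module.Dual A M → ((V →ₗ[A] A) × A) → T2)
    (tt2_addl : ∀ (δ δ' : Module.Dual A M) (x : (V →ₗ[A] A) × A),
      tt2 (δ + δ') x = tt2 δ x + tt2 δ' x)
    (tt2_addr : ∀ (δ : Module.Dual A M) (x x' : (V →ₗ[A] A) × A),
      tt2 δ (x + x') = tt2 δ x + tt2 δ x')
    (tt2_bal : ∀ (a : A) (δ : Module.Dual A M) (θ : V →ₗ[A] A) (b : A),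
      tt2 (a • δ) (θ, b) = tt2 δ (a • θ + b • rhoStar ρ a, a * b))
    (tt2_mod : ∀ (a : A) (δ : Module.Dual A M) (θ : V →ₗ[A] A) (b : A),
      a • tt2 δ (θ, b) = tt2 δ (a • θ, b * a))
    (tt2_univ : ∀ (N : Type u) [AddCommGroup N]
      (f : Module.Dual A M → ((V →ₗ[A] A) × A) → N),
      (∀ δ δ' x, f (δ + δ') x = f δ x + f δ' x) →
      (∀ δ x x', f δ (x + x') = f δ x + f δ x') →
      (∀ (a : A) (δ : Module.Dual A M) (θ : V →ₗ[A] A) (b : A),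
        f (a • δ) (θ, b) = f δ (a • θ + b • rhoStar ρ a, a * b)) →
      ∃! F : T2 →+ N, ∀ δ x, F (tt2 δ x) = f δ x)
    -- the two maps of the sequence (2)
    (map1 : (Module.Dual A M) ⊗[A] (V →ₗ[A] A) →ₗ[A] T2)
    (hmap1 : ∀ (δ : Module.Dual A M) (θ : V →ₗ[A] A), map1 (δ ⊗ₜ[A] θ) = tt2 δ (θ, 0))
    (map2 : T2 →ₗ[A] Module.Dual A M)
    (hmap2 : ∀ (δ : Module.Dual A M) (θ : V →ₗ[A] A) (b : A),
      map2 (tt2 δ (θ, b)) = b • δ)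
    -- the canonical map `M^* ⊗_A V^* → (V ⊗_A M)^*`
    (canMap : (Module.Dual A M) ⊗[A] (V →ₗ[A] A) →ₗ[A] Module.Dual A (V ⊗[A] M))
    (hcan : ∀ (δ : Module.Dual A M) (θ : V →ₗ[A] A) (v : V) (m : M),
      canMap (δ ⊗ₜ[A] θ) (v ⊗ₜ[A] m) = θ v * δ m) :
    -- (1) the dual of the Atiyah sequence is exact
    (Function.Injective piT.dualMap ∧
      (∀ g : Module.Dual A T, unitT.dualMap g = 0 ↔ g ∈ LinearMap.range piT.dualMap) ∧
      Function.Surjective unitT.dualMap) ∧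
    -- (2) the sequence `0 → M^* ⊗_A V^* → M^* ⊗_A Σ_V^* → M^* → 0` is exact
    (Function.Injective map1 ∧
      (∀ y : T2, map2 y = 0 ↔ y ∈ LinearMap.range map1) ∧
      Function.Surjective map2) ∧
    -- (3) `Θ` is a well-defined `A`-linear isomorphism of short exact sequences
    (∃ Θ : T2 →ₗ[A] Module.Dual A T,
      (∀ (δ : Module.Dual A M) (θ : V →ₗ[A] A) (b a : A) (v : V) (m : M),
        Θ (tt2 δ (θ, b)) (tt (a, v) m) = (b * a + θ v) * δ m + b * ρ v (δ m)) ∧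
      Function.Bijective Θ ∧ Function.Bijective canMap ∧
      (∀ x : (Module.Dual A M) ⊗[A] (V →ₗ[A] A),
        Θ (map1 x) = piT.dualMap (canMap x)) ∧
      (∀ y : T2, unitT.dualMap (Θ y) = map2 y)) := by
  have hT : IsAtiyahTensor ρ tt := ⟨tt_addl, tt_addr, tt_bal, tt_mod, tt_univ⟩
  have hT2 : IsDualAtiyahTensor ρ tt2 := ⟨tt2_addl, tt2_addr, tt2_bal, tt2_mod, tt2_univ⟩
  obtain ⟨Θ, hΘ⟩ := hT2.exists_linearMap_atiyahPairing hT
  have hcan_bij := dualTensor_bijective_of_projective canMap hcan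
  have hsq1 := hT.comp_map1_eq_dualMap_comp hΘ hmap1 hpi hcan
  have hsq2 := hT2.dualMap_comp_eq_map2 hΘ hunit hmap2
  have hpi_surj : Function.Surjective piT := fun z =>
    z.induction_on ⟨0, map_zero piT⟩ (fun v m => ⟨tt (0, v) m, hpi 0 v m⟩)
      fun _ _ ⟨t, ht⟩ ⟨t', ht'⟩ => ⟨t + t', by rw [map_add, ht, ht']⟩
  have hmap2_surj : Function.Surjective map2 := fun δ => ⟨tt2 δ (0, 1), by rw [hmap2, one_smul]⟩
  have hpi_inj := LinearMap.dualMap_injective_of_surjective hpi_surj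
  have hex1 := (hT.exact hunit hpi).dualMap hpi_surj
  have hunit_surj : Function.Surjective unitT.dualMap :=
    .of_comp (g := Θ) (by rw [← LinearMap.coe_comp, hsq2]; exact hmap2_surj)
  have hmap1_inj : Function.Injective map1 :=
    .of_comp (f := Θ) (by rw [← LinearMap.coe_comp, hsq1]; exact hpi_inj.comp hcan_bij.1)
  have hex2 := hT2.exact hmap1 hmap2
  refine ⟨⟨hpi_inj, hex1, hunit_surj⟩, ⟨hmap1_inj, hex2, hmap2_surj⟩, Θ,
    fun δ θ b a v m => hΘ δ θ b (a, v) m, ?_, hcan_bij, fun x => congr($hsq1 x),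
    fun y => congr($hsq2 y)⟩
  exact LinearMap.bijective_of_shortExact_ladder (M₁ := Module.Dual A M ⊗[A] (V →ₗ[A] A))
    hsq1.symm (by rw [hsq2, LinearMap.id_comp]) hmap1_inj hex2 hmap2_surj hpi_inj hex1 hcan_bij
    Function.bijective_id

/-- Let `(V,ρ)` be an anchored `A`-module with `V` finitely generated projective, and `M`
any `A`-module.  Let `T` (with `tt`) be a realization of `Σ_V ⊗_A M` (balanced against
the right `A`-action on the Atiyah bimodule `Σ_V = A × V`, with the `A`-module structure
induced by the left `A`-action), with Atiyah sequence `m ↦ tt (1,0) m` and projection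
`piT`; and let `T2` (with `tt2`) be a realization of `M^* ⊗_A Σ_V^*` (balanced against
the twisted left `A`-action on `Σ_V^* = V^* × A`, with the `A`-module structure coming
from the natural right `A`-action), with the maps `map1 : δ⊗θ ↦ δ⊗(θ,0)` and
`map2 : δ⊗(θ,a) ↦ a•δ`, and let `canMap` be the canonical map
`M^* ⊗_A V^* → (V ⊗_A M)^*`.  Then:
(1) the `A`-linear dual of the Atiyah sequence of `M` is a short exact sequence;
(2) the sequence `0 → M^* ⊗_A V^* → M^* ⊗_A Σ_V^* → M^* → 0` is a short exact sequence;
(3) the formula `Θ(δ⊗(θ,b))((a,v)⊗m) = (ba + θ(v))·δ(m) + b·ρ(v)(δ(m))` defines a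
well-defined `A`-linear isomorphism `Θ : M^* ⊗_A Σ_V^* → (Σ_V ⊗_A M)^*` which, together
with the canonical isomorphism `M^* ⊗_A V^* ≅ (V ⊗_A M)^*` and the identity of `M^*`,
is an isomorphism between the short exact sequences of (2) and (1). -/
theorem stmt_9 (k A V M T T2 : Type u) [Field k] [CharZero k] [CommRing A] [Algebra k A]
    [AddCommGroup V] [Module A V] [Module.Finite A V] [Module.Projective A V]
    [AddCommGroup M] [Module A M]
    [AddCommGroup T] [Module A T] [AddCommGroup T2] [Module A T2]
    (ρ : V →ₗ[A] Derivation k A A)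
    -- `T` realizes `Σ_V ⊗_A M` with the `A`-structure from the left action on `Σ_V`
    (tt : (A × V) → M → T)
    (tt_addl : ∀ (s s' : A × V) (m : M), tt (s + s') m = tt s m + tt s' m)
    (tt_addr : ∀ (s : A × V) (m m' : M), tt s (m + m') = tt s m + tt s m')
    (tt_bal : ∀ (b a : A) (v : V) (m : M),
      tt (b * a + ρ v a, a • v) m = tt (b, v) (a • m))
    (tt_mod : ∀ (a b : A) (v : V) (m : M), a • tt (b, v) m = tt (a * b, a • v) m)
    (tt_univ : ∀ (N : Type u) [AddCommGroup N] (f : (A × V) → M → N),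
      (∀ (s s' : A × V) (m : M), f (s + s') m = f s m + f s' m) →
      (∀ (s : A × V) (m m' : M), f s (m + m') = f s m + f s m') →
      (∀ (b a : A) (v : V) (m : M), f (b * a + ρ v a, a • v) m = f (b, v) (a • m)) →
      ∃! F : T →+ N, ∀ s m, F (tt s m) = f s m)
    -- the two maps of the Atiyah sequence of `M`
    (unitT : M →ₗ[A] T) (hunit : ∀ m : M, unitT m = tt (1, 0) m)
    (piT : T →ₗ[A] V ⊗[A] M)
    (hpi : ∀ (a : A) (v : V) (m : M), piT (tt (a, v) m) = v ⊗ₜ[A] m)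
    -- `T2` realizes `M^* ⊗_A Σ_V^*`, balanced against the twisted left `A`-action on
    -- `Σ_V^*`, with the `A`-module structure from the natural right `A`-action
    (tt2 : Module.Dual A M → ((V →ₗ[A] A) × A) → T2)
    (tt2_addl : ∀ (δ δ' : Module.Dual A M) (x : (V →ₗ[A] A) × A),
      tt2 (δ + δ') x = tt2 δ x + tt2 δ' x)
    (tt2_addr : ∀ (δ : Module.Dual A M) (x x' : (V →ₗ[A] A) × A),
      tt2 δ (x + x') = tt2 δ x + tt2 δ x')
    (tt2_bal : ∀ (a : A) (δ : Module.Dual A M) (θ : V →ₗ[A] A) (b : A),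
      tt2 (a • δ) (θ, b) = tt2 δ (a • θ + b • rhoStar ρ a, a * b))
    (tt2_mod : ∀ (a : A) (δ : Module.Dual A M) (θ : V →ₗ[A] A) (b : A),
      a • tt2 δ (θ, b) = tt2 δ (a • θ, b * a))
    (tt2_univ : ∀ (N : Type u) [AddCommGroup N]
      (f : Module.Dual A M → ((V →ₗ[A] A) × A) → N),
      (∀ δ δ' x, f (δ + δ') x = f δ x + f δ' x) →
      (∀ δ x x', f δ (x + x') = f δ x + f δ x') →
      (∀ (a : A) (δ : Module.Dual A M) (θ : V →ₗ[A] A) (b : A),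
        f (a • δ) (θ, b) = f δ (a • θ + b • rhoStar ρ a, a * b)) →
      ∃! F : T2 →+ N, ∀ δ x, F (tt2 δ x) = f δ x)
    -- the two maps of the sequence (2)
    (map1 : (Module.Dual A M) ⊗[A] (V →ₗ[A] A) →ₗ[A] T2)
    (hmap1 : ∀ (δ : Module.Dual A M) (θ : V →ₗ[A] A), map1 (δ ⊗ₜ[A] θ) = tt2 δ (θ, 0))
    (map2 : T2 →ₗ[A] Module.Dual A M)
    (hmap2 : ∀ (δ : Module.Dual A M) (θ : V →ₗ[A] A) (b : A),
      map2 (tt2 δ (θ, b)) = b • δ)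
    -- the canonical map `M^* ⊗_A V^* → (V ⊗_A M)^*`
    (canMap : (Module.Dual A M) ⊗[A] (V →ₗ[A] A) →ₗ[A] Module.Dual A (V ⊗[A] M))
    (hcan : ∀ (δ : Module.Dual A M) (θ : V →ₗ[A] A) (v : V) (m : M),
      canMap (δ ⊗ₜ[A] θ) (v ⊗ₜ[A] m) = θ v * δ m) :
    -- (1) the dual of the Atiyah sequence is exact
    (Function.Injective piT.dualMap ∧
      (∀ g : Module.Dual A T, unitT.dualMap g = 0 ↔ g ∈ LinearMap.range piT.dualMap) ∧
      Function.Surjective unitT.dualMap) ∧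
    -- (2) the sequence `0 → M^* ⊗_A V^* → M^* ⊗_A Σ_V^* → M^* → 0` is exact
    (Function.Injective map1 ∧
      (∀ y : T2, map2 y = 0 ↔ y ∈ LinearMap.range map1) ∧
      Function.Surjective map2) ∧
    -- (3) `Θ` is a well-defined `A`-linear isomorphism of short exact sequences
    (∃ Θ : T2 →ₗ[A] Module.Dual A T,
      (∀ (δ : Module.Dual A M) (θ : V →ₗ[A] A) (b a : A) (v : V) (m : M),
        Θ (tt2 δ (θ, b)) (tt (a, v) m) = (b * a + θ v) * δ m + b * ρ v (δ m)) ∧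
      Function.Bijective Θ ∧ Function.Bijective canMap ∧
      (∀ x : (Module.Dual A M) ⊗[A] (V →ₗ[A] A),
        Θ (map1 x) = piT.dualMap (canMap x)) ∧
      (∀ y : T2, unitT.dualMap (Θ y) = map2 y)) :=
  stmt_9_general k A V M T T2 ρ tt tt_addl tt_addr tt_bal tt_mod tt_univ unitT hunit piT hpi tt2
    tt2_addl tt2_addr tt2_bal tt2_mod tt2_univ map1 hmap1 map2 hmap2 canMap hcan
end
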